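/- Let P : [a,b] × [T,∞) → ℝ be C² in k with ∂_k P(k,t) ∈ [−(3/(4a²))Q(t), −(3/(8b²))Q(t)] and ∂_k² P(k,t) ≥ c₀ Q(t) for all k ∈ [a,b] and t ≥ T, where Q(t) → +∞ and c₀ > 0. Let f ∈ C₀^∞((a,b)). Then there is a constant C such that for all sufficiently large t and all x > 0, |∫₀^∞ f(k) exp(i(−kx + kt + P(k,t))) dk| ≤ C Q(t)^{-1/2}. -/

import Mathlib

open Set Filter MeasureTheory

open intervalIntegral in

lemma sp_piece (a b c d L M0 M1 : ℝ) (hL : 0 < L) (hM0 : 0 ≤ M0) (hM1 : 0 ≤ M1)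
    (hac : a ≤ c) (hcd : c ≤ d) (hdb : d ≤ b)
    (φ φd φdd : ℝ → ℝ)
    (hφ : ∀ k ∈ Icc a b, HasDerivAt φ (φd k) k)
    (hφd : ∀ k ∈ Icc a b, HasDerivAt φd (φdd k) k)
    (hφdd0 : ∀ k ∈ Icc a b, 0 ≤ φdd k)
    (hmeas : AEStronglyMeasurable φdd (volume.restrict (Ioc c d)))
    (hbig : ∀ k ∈ Icc c d, L ≤ |φd k|)
    (f : ℝ → ℂ) (hf : ContDiff ℝ (⊤ : ℕ∞) f)
    (hfM0 : ∀ k, ‖f k‖ ≤ M0) (hfM1 : ∀ k ∈ Icc a b, ‖deriv f k‖ ≤ M1) :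
    ‖∫ k in c..d, f k * Complex.exp (Complex.I * (φ k : ℂ))‖
      ≤ (4 * M0 + (b - a) * M1) / L := by
  have hab : a ≤ b := hac.trans (hcd.trans hdb)
  have hsub : Icc c d ⊆ Icc a b := Icc_subset_Icc hac hdb
  set g : ℝ → ℂ := fun k => Complex.I * (φd k : ℂ) with hg
  set v : ℝ → ℂ := fun k => Complex.exp (Complex.I * (φ k : ℂ)) with hv
  have hgnorm : ∀ k, ‖g k‖ = |φd k| := by
    intro k
    simp [hg, Complex.norm_real, Real.norm_eq_abs]
  have hvnorm : ∀ k, ‖v k‖ = 1 := by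
    intro k
    simp [hv, Complex.norm_exp]
  have hgL : ∀ k ∈ Icc c d, L ≤ ‖g k‖ := fun k hk => (hgnorm k) ▸ hbig k hk
  have hgne : ∀ k ∈ Icc c d, g k ≠ 0 := by
    intro k hk
    have := hL.trans_le (hgL k hk)
    exact norm_pos_iff.mp this
  have hφdne : ∀ k ∈ Icc c d, φd k ≠ 0 := by
    intro k hk
    have := hL.trans_le (hbig k hk)
    exact abs_pos.mp this
  have hginv_le : ∀ k ∈ Icc c d, ‖(g k)⁻¹‖ ≤ L⁻¹ := by
    intro k hk
    rw [norm_inv]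
    exact inv_anti₀ hL (hgL k hk)
  -- continuity facts
  have hφcont : ContinuousOn φ (Icc a b) := fun k hk => (hφ k hk).continuousAt.continuousWithinAt
  have hφdcont : ContinuousOn φd (Icc a b) :=
    fun k hk => (hφd k hk).continuousAt.continuousWithinAt
  have hgcont : ContinuousOn g (Icc a b) :=
    continuousOn_const.mul (Complex.continuous_ofReal.comp_continuousOn hφdcont)
  have hvcont : ContinuousOn v (Icc a b) :=
    Complex.continuous_exp.comp_continuousOn
      (continuousOn_const.mul (Complex.continuous_ofReal.comp_continuousOn hφcont))
  have hfc : Continuous f := hf.continuous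
  have hf'c : Continuous (deriv f) := hf.continuous_deriv (by simp)
  set u : ℝ → ℂ := fun k => f k * (g k)⁻¹ with hu
  set I1 : ℝ → ℂ := fun k => deriv f k * (g k)⁻¹ with hI1
  set I2 : ℝ → ℂ := fun k => f k * (-(Complex.I * (φdd k : ℂ)) / g k ^ 2) with hI2
  set v' : ℝ → ℂ := fun k => v k * g k with hv'
  set D0 : ℝ → ℝ := fun k => φdd k / (φd k) ^ 2 with hD0
  have huIcc : uIcc c d = Icc c d := uIcc_of_le hcd
  -- derivatives
  have hud : ∀ k ∈ uIcc c d, HasDerivAt u (I1 k + I2 k) k := by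
    rw [huIcc]
    intro k hk
    have hfd : HasDerivAt f (deriv f k) k := (hf.differentiable (by simp) k).hasDerivAt
    have hginv : HasDerivAt (fun k => (g k)⁻¹) (-(Complex.I * (φdd k : ℂ)) / g k ^ 2) k := by
      have h := (hasDerivAt_const k (1:ℂ)).div
        (((hφd k (hsub hk)).ofReal_comp).const_mul Complex.I) (hgne k hk)
      exact (((hφd k (hsub hk)).ofReal_comp).const_mul Complex.I).inv (hgne k hk)
    exact hfd.mul hginv
  have hvd : ∀ k ∈ uIcc c d, HasDerivAt v (v' k) k := by
    rw [huIcc]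
    intro k hk
    exact (((hφ k (hsub hk)).ofReal_comp).const_mul Complex.I).cexp
  -- integrability
  have hI1i : IntervalIntegrable I1 volume c d := by
    apply ContinuousOn.intervalIntegrable
    rw [huIcc]
    exact (hf'c.continuousOn).mul (((hgcont.mono hsub)).inv₀ hgne)
  have hD0i : IntegrableOn D0 (Ioc c d) := by
    apply integrableOn_deriv_of_nonneg (g := fun k => -(φd k)⁻¹)
    · exact (((hφdcont.mono hsub)).inv₀ hφdne).neg
    · intro x hx
      have hx' : x ∈ Icc c d := Ioo_subset_Icc_self hx
      have := ((hφd x (hsub hx')).inv (hφdne x hx')).neg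
      exact this.congr_deriv (by simp [hD0, neg_div])
    · intro x hx
      have hx' : x ∈ Icc c d := Ioo_subset_Icc_self hx
      exact div_nonneg (hφdd0 x (hsub hx')) (sq_nonneg _)
  have hD0ii : IntervalIntegrable D0 volume c d :=
    (intervalIntegrable_iff_integrableOn_Ioc_of_le hcd).mpr hD0i
  have hI2normle : ∀ k ∈ Icc c d, ‖I2 k‖ ≤ M0 * D0 k := by
    intro k hk
    have h1 : ‖I2 k‖ = ‖f k‖ * (D0 k) := by
      have : ‖-(Complex.I * (φdd k : ℂ)) / g k ^ 2‖ = D0 k := by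
        rw [norm_div, norm_neg, norm_mul, norm_pow, hgnorm]
        simp only [Complex.norm_I, one_mul, Complex.norm_real, Real.norm_eq_abs, _root_.sq_abs]
        rw [_root_.abs_of_nonneg (hφdd0 k (hsub hk))]
      rw [hI2]; rw [norm_mul, this]
    rw [h1]
    apply mul_le_mul_of_nonneg_right (hfM0 k)
    exact div_nonneg (hφdd0 k (hsub hk)) (sq_nonneg _)
  have hI2meas : AEStronglyMeasurable I2 (volume.restrict (Ioc c d)) := by
    have h1 : AEStronglyMeasurable (fun k => f k * (-Complex.I) / g k ^ 2)
        (volume.restrict (Ioc c d)) := by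
      apply ContinuousOn.aestronglyMeasurable _ measurableSet_Ioc
      have hsub2 : Ioc c d ⊆ Icc a b := (Ioc_subset_Icc_self).trans hsub
      exact ((hfc.continuousOn.mul continuousOn_const).div ((hgcont.mono hsub2).pow 2)
        (fun k hk => pow_ne_zero 2 (hgne k (Ioc_subset_Icc_self hk))))
    have h2 : AEStronglyMeasurable (fun k => ((φdd k : ℝ) : ℂ))
        (volume.restrict (Ioc c d)) :=
      Complex.continuous_ofReal.comp_aestronglyMeasurable hmeas
    apply (h1.mul h2).congr
    filter_upwards with k
    simp only [Pi.mul_apply, hI2]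
    ring
  have hI2i : IntegrableOn I2 (Ioc c d) := by
    apply Integrable.mono' (hD0i.const_mul M0) hI2meas
    rw [ae_restrict_iff' measurableSet_Ioc]
    filter_upwards with k hk
    exact hI2normle k (Ioc_subset_Icc_self hk)
  have hI2ii : IntervalIntegrable I2 volume c d :=
    (intervalIntegrable_iff_integrableOn_Ioc_of_le hcd).mpr hI2i
  have hui : IntervalIntegrable (fun k => I1 k + I2 k) volume c d := hI1i.add hI2ii
  have hvi : IntervalIntegrable v' volume c d := by
    apply ContinuousOn.intervalIntegrable
    rw [huIcc]
    exact (hvcont.mono hsub).mul (hgcont.mono hsub)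
  -- integration by parts
  have hparts := intervalIntegral.integral_mul_deriv_eq_deriv_mul hud hvd hui hvi
  have hcongr : ∫ k in c..d, f k * Complex.exp (Complex.I * (φ k : ℂ))
      = ∫ k in c..d, u k * v' k := by
    apply intervalIntegral.integral_congr
    intro k hk
    rw [huIcc] at hk
    have := hgne k hk
    simp only [hu, hv', hv]
    field_simp
  rw [hcongr, hparts]
  -- bound the boundary terms
  have hbdry : ∀ k ∈ Icc c d, ‖u k * v k‖ ≤ M0 * L⁻¹ := by
    intro k hk
    rw [norm_mul, norm_mul, hvnorm, mul_one]
    exact mul_le_mul (hfM0 k) (hginv_le k hk) (norm_nonneg _) hM0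
  -- split the remaining integral
  have hI1v : IntervalIntegrable (fun k => I1 k * v k) volume c d :=
    hI1i.mul_continuousOn (by rw [huIcc]; exact hvcont.mono hsub)
  have hI2v : IntervalIntegrable (fun k => I2 k * v k) volume c d :=
    hI2ii.mul_continuousOn (by rw [huIcc]; exact hvcont.mono hsub)
  have hsplit : ∫ k in c..d, (I1 k + I2 k) * v k
      = (∫ k in c..d, I1 k * v k) + ∫ k in c..d, I2 k * v k := by
    rw [← intervalIntegral.integral_add hI1v hI2v]
    apply intervalIntegral.integral_congr
    intro k _
    ring
  -- bound ∫ I1 v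
  have hb1 : ‖∫ k in c..d, I1 k * v k‖ ≤ (b - a) * M1 * L⁻¹ := by
    have h := intervalIntegral.norm_integral_le_of_norm_le_const
      (C := M1 * L⁻¹) (f := fun k => I1 k * v k) (a := c) (b := d) ?_
    · calc ‖∫ k in c..d, I1 k * v k‖ ≤ M1 * L⁻¹ * |d - c| := h
        _ ≤ M1 * L⁻¹ * (b - a) := by
            apply mul_le_mul_of_nonneg_left _ (by positivity)
            rw [_root_.abs_of_nonneg (by linarith : (0:ℝ) ≤ d - c)]
            linarith
        _ = (b - a) * M1 * L⁻¹ := by ring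
    · intro k hk
      rw [uIoc_of_le hcd] at hk
      have hk' : k ∈ Icc c d := Ioc_subset_Icc_self hk
      rw [norm_mul, norm_mul, hvnorm, mul_one]
      exact mul_le_mul (hfM1 k (hsub hk')) (hginv_le k hk') (norm_nonneg _) hM1
  -- bound ∫ I2 v
  have hb2 : ‖∫ k in c..d, I2 k * v k‖ ≤ 2 * M0 * L⁻¹ := by
    have hstep1 : ‖∫ k in c..d, I2 k * v k‖ ≤ ∫ k in c..d, M0 * D0 k := by
      calc ‖∫ k in c..d, I2 k * v k‖ ≤ ∫ k in c..d, ‖I2 k * v k‖ :=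
            intervalIntegral.norm_integral_le_integral_norm hcd
        _ ≤ ∫ k in c..d, M0 * D0 k := by
            apply intervalIntegral.integral_mono_on hcd hI2v.norm (hD0ii.const_mul M0)
            intro k hk
            rw [norm_mul, hvnorm, mul_one]
            exact hI2normle k hk
    have hftc : ∫ k in c..d, D0 k = -(φd d)⁻¹ - -(φd c)⁻¹ := by
      apply intervalIntegral.integral_eq_sub_of_hasDerivAt _ hD0ii
      rw [huIcc]
      intro x hx
      have := ((hφd x (hsub hx)).inv (hφdne x hx)).neg
      exact this.congr_deriv (by simp [hD0, neg_div])
    have hend : -(φd d)⁻¹ - -(φd c)⁻¹ ≤ 2 * L⁻¹ := by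
      have h1 : |(φd c)⁻¹| ≤ L⁻¹ := by
        rw [abs_inv]
        exact inv_anti₀ hL (hbig c ⟨le_refl c, hcd⟩)
      have h2 : |(φd d)⁻¹| ≤ L⁻¹ := by
        rw [abs_inv]
        exact inv_anti₀ hL (hbig d ⟨hcd, le_refl d⟩)
      have := abs_le.mp h1
      have := abs_le.mp h2
      cases abs_le.mp h1 with
      | intro h1l h1r => cases abs_le.mp h2 with
        | intro h2l h2r => linarith
    calc ‖∫ k in c..d, I2 k * v k‖ ≤ ∫ k in c..d, M0 * D0 k := hstep1
      _ = M0 * ∫ k in c..d, D0 k := intervalIntegral.integral_const_mul M0 D0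
      _ = M0 * (-(φd d)⁻¹ - -(φd c)⁻¹) := by rw [hftc]
      _ ≤ M0 * (2 * L⁻¹) := mul_le_mul_of_nonneg_left hend hM0
      _ = 2 * M0 * L⁻¹ := by ring
  -- put it together
  have hfinal : ‖u d * v d - u c * v c - ∫ k in c..d, (I1 k + I2 k) * v k‖
      ≤ M0 * L⁻¹ + M0 * L⁻¹ + ((b - a) * M1 * L⁻¹ + 2 * M0 * L⁻¹) := by
    calc ‖u d * v d - u c * v c - ∫ k in c..d, (I1 k + I2 k) * v k‖
        ≤ ‖u d * v d - u c * v c‖ + ‖∫ k in c..d, (I1 k + I2 k) * v k‖ := norm_sub_le _ _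
      _ ≤ ‖u d * v d‖ + ‖u c * v c‖ + ‖∫ k in c..d, (I1 k + I2 k) * v k‖ := by
          have := norm_sub_le (u d * v d) (u c * v c)
          linarith
      _ ≤ M0 * L⁻¹ + M0 * L⁻¹ + ((b - a) * M1 * L⁻¹ + 2 * M0 * L⁻¹) := by
          have h1 := hbdry d ⟨hcd, le_refl d⟩
          have h2 := hbdry c ⟨le_refl c, hcd⟩
          have h3 : ‖∫ k in c..d, (I1 k + I2 k) * v k‖
              ≤ (b - a) * M1 * L⁻¹ + 2 * M0 * L⁻¹ := by
            rw [hsplit]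
            calc ‖(∫ k in c..d, I1 k * v k) + ∫ k in c..d, I2 k * v k‖
                ≤ ‖∫ k in c..d, I1 k * v k‖ + ‖∫ k in c..d, I2 k * v k‖ := norm_add_le _ _
              _ ≤ (b - a) * M1 * L⁻¹ + 2 * M0 * L⁻¹ := add_le_add hb1 hb2
          linarith
  calc ‖u d * v d - u c * v c - ∫ k in c..d, (I1 k + I2 k) * v k‖
      ≤ M0 * L⁻¹ + M0 * L⁻¹ + ((b - a) * M1 * L⁻¹ + 2 * M0 * L⁻¹) := hfinal
    _ = (4 * M0 + (b - a) * M1) / L := by field_simp; ring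

open intervalIntegral in

lemma sp_gap (a b lam : ℝ) (hlam : 0 ≤ lam) (φd φdd : ℝ → ℝ)
    (hφd : ∀ k ∈ Icc a b, HasDerivAt φd (φdd k) k)
    (hconv : ∀ k ∈ Icc a b, lam ≤ φdd k) :
    ∀ c ∈ Icc a b, ∀ d ∈ Icc a b, c ≤ d → lam * (d - c) ≤ φd d - φd c := by
  intro c hc d hd hcd
  set h : ℝ → ℝ := fun k => φd k - lam * k with hh
  have hder : ∀ k ∈ Icc a b, HasDerivAt h (φdd k - lam) k := by
    intro k hk
    exact (hφd k hk).sub (by simpa using (hasDerivAt_id k).const_mul lam)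
  have hmono : MonotoneOn h (Icc a b) := by
    apply monotoneOn_of_deriv_nonneg (convex_Icc a b)
    · exact fun k hk => (hder k hk).continuousAt.continuousWithinAt
    · intro k hk
      rw [interior_Icc] at hk
      exact ((hder k (Ioo_subset_Icc_self hk)).differentiableAt).differentiableWithinAt
    · intro k hk
      rw [interior_Icc] at hk
      rw [(hder k (Ioo_subset_Icc_self hk)).deriv]
      have := hconv k (Ioo_subset_Icc_self hk)
      linarith
  have := hmono hc hd hcd
  simp only [hh] at this
  linarith

/-- Stationary phase bound: if `∂_k P(k,t) ∈ [−(3/(4a²))Q(t), −(3/(8b²))Q(t)]` and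
`∂_k² P(k,t) ≥ c₀ Q(t)` on `[a,b]` with `Q(t) → ∞`, then for any `f ∈ C₀^∞((a,b))`
the oscillatory integral `∫ f(k) e^{i(−kx+kt+P(k,t))} dk` is `O(Q(t)^{−1/2})`
uniformly in `x > 0` for large `t`. -/
theorem stmt18 (a b T : ℝ) (ha : 0 < a) (hab : a < b)
    (Q : ℝ → ℝ) (hQ : Filter.Tendsto Q Filter.atTop Filter.atTop)
    (c₀ : ℝ) (hc₀ : 0 < c₀)
    (P Pk Pkk : ℝ → ℝ → ℝ)
    (hPk : ∀ t ≥ T, ∀ k ∈ Set.Icc a b, HasDerivAt (fun k' => P k' t) (Pk k t) k)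
    (hPkk : ∀ t ≥ T, ∀ k ∈ Set.Icc a b, HasDerivAt (fun k' => Pk k' t) (Pkk k t) k)
    (hrange : ∀ t ≥ T, ∀ k ∈ Set.Icc a b,
      Pk k t ∈ Set.Icc (-(3 / (4 * a ^ 2)) * Q t) (-(3 / (8 * b ^ 2)) * Q t))
    (hconv : ∀ t ≥ T, ∀ k ∈ Set.Icc a b, c₀ * Q t ≤ Pkk k t)
    (f : ℝ → ℂ) (hf : ContDiff ℝ (⊤ : ℕ∞) f) (hsupp : ∀ k : ℝ, k ∉ Set.Ioo a b → f k = 0) :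
    ∃ C : ℝ, ∀ᶠ t in Filter.atTop, ∀ x > (0:ℝ),
      ‖∫ k in Set.Ioi (0:ℝ),
          f k * Complex.exp (Complex.I * ((-(k * x) + k * t + P k t : ℝ) : ℂ))‖
        ≤ C * (Q t) ^ (-(1:ℝ)/2) := by
  have hfc : Continuous f := hf.continuous
  obtain ⟨M0', hM0'⟩ := (isCompact_Icc (a := a) (b := b)).exists_bound_of_continuousOn
    hfc.continuousOn
  obtain ⟨M1', hM1'⟩ := (isCompact_Icc (a := a) (b := b)).exists_bound_of_continuousOn
    (hf.continuous_deriv (by simp)).continuousOn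
  set M0 := max M0' 0 with hM0def
  set M1 := max M1' 0 with hM1def
  have hM0 : 0 ≤ M0 := le_max_right _ _
  have hM1 : 0 ≤ M1 := le_max_right _ _
  have hfM0 : ∀ k, ‖f k‖ ≤ M0 := by
    intro k
    by_cases hk : k ∈ Icc a b
    · exact (hM0' k hk).trans (le_max_left _ _)
    · rw [hsupp k (fun hk' => hk (Ioo_subset_Icc_self hk'))]
      simpa using hM0
  have hfM1 : ∀ k ∈ Icc a b, ‖deriv f k‖ ≤ M1 := fun k hk => (hM1' k hk).trans (le_max_left _ _)
  refine ⟨(10 * M0 + 2 * (b - a) * M1) / Real.sqrt c₀, ?_⟩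
  filter_upwards [eventually_ge_atTop T, hQ.eventually_ge_atTop 1] with t ht hQt
  intro x hx
  set lam := c₀ * Q t with hlamdef
  have hQt0 : (0:ℝ) < Q t := lt_of_lt_of_le one_pos hQt
  have hlam0 : 0 < lam := mul_pos hc₀ hQt0
  set L := Real.sqrt lam with hLdef
  have hL0 : 0 < L := Real.sqrt_pos.mpr hlam0
  have hLsq : L ^ 2 = lam := Real.sq_sqrt hlam0.le
  set φ : ℝ → ℝ := fun k => -(k * x) + k * t + P k t with hφdef
  set φd : ℝ → ℝ := fun k => -x + t + Pk k t with hφddef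
  set φdd : ℝ → ℝ := fun k => Pkk k t with hφdddef
  have hφ : ∀ k ∈ Icc a b, HasDerivAt φ (φd k) k := by
    intro k hk
    have h1 : HasDerivAt (fun k' : ℝ => -(k' * x)) (-x) k := by
      exact ((hasDerivAt_id k).mul_const x).neg.congr_deriv (by simp)
    have h2 : HasDerivAt (fun k' : ℝ => k' * t) t k := by
      simpa using (hasDerivAt_id k).mul_const t
    exact (h1.add h2).add (hPk t ht k hk)
  have hφd : ∀ k ∈ Icc a b, HasDerivAt φd (φdd k) k := by
    intro k hk
    exact (hPkk t ht k hk).const_add (-x + t)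
  have hφdd_ge : ∀ k ∈ Icc a b, lam ≤ φdd k := fun k hk => hconv t ht k hk
  have hφdd0 : ∀ k ∈ Icc a b, 0 ≤ φdd k := fun k hk => le_trans hlam0.le (hφdd_ge k hk)
  have hgap := sp_gap a b lam hlam0.le φd φdd hφd hφdd_ge
  have hmono : ∀ c ∈ Icc a b, ∀ d ∈ Icc a b, c ≤ d → φd c ≤ φd d := by
    intro c hc d hd hcd
    have h1 := hgap c hc d hd hcd
    nlinarith [mul_nonneg hlam0.le (sub_nonneg.mpr hcd)]
  have hφdcont : ContinuousOn φd (Icc a b) :=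
    fun k hk => (hφd k hk).continuousAt.continuousWithinAt
  have hφcont : ContinuousOn φ (Icc a b) :=
    fun k hk => (hφ k hk).continuousAt.continuousWithinAt
  have hmeas : ∀ c d : ℝ, a ≤ c → d ≤ b →
      AEStronglyMeasurable φdd (volume.restrict (Ioc c d)) := by
    intro c d hc hd
    have h1 : AEStronglyMeasurable (deriv (fun k' => Pk k' t)) (volume.restrict (Ioc c d)) :=
      (measurable_deriv _).aestronglyMeasurable
    apply h1.congr
    rw [Filter.EventuallyEq, ae_restrict_iff' measurableSet_Ioc]
    filter_upwards with k hk
    have hk' : k ∈ Icc a b := ⟨hc.trans hk.1.le, hk.2.trans hd⟩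
    exact (hPkk t ht k hk').deriv
  have hmem_a : a ∈ Icc a b := ⟨le_refl a, hab.le⟩
  have hmem_b : b ∈ Icc a b := ⟨hab.le, le_refl b⟩
  -- decomposition points
  obtain ⟨u, v, hau, huv, hvb, hu, hv, hmid⟩ :
      ∃ u v : ℝ, a ≤ u ∧ u ≤ v ∧ v ≤ b ∧
        (u = a ∨ ∀ k ∈ Icc a u, L ≤ |φd k|) ∧
        (v = b ∨ ∀ k ∈ Icc v b, L ≤ |φd k|) ∧
        v - u ≤ 2 / L := by
    by_cases h1 : φd b ≤ -L
    · refine ⟨b, b, hab.le, le_refl b, le_refl b, Or.inr ?_, Or.inl rfl, by rw [sub_self]; positivity⟩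
      intro k hk
      have h2 : φd k ≤ -L := (hmono k hk b hmem_b hk.2).trans h1
      rw [abs_of_nonpos (by linarith)]
      linarith
    by_cases h2 : L ≤ φd a
    · refine ⟨a, a, le_refl a, le_refl a, hab.le, Or.inl rfl, Or.inr ?_, by rw [sub_self]; positivity⟩
      intro k hk
      have h3 : L ≤ φd k := h2.trans (hmono a hmem_a k hk hk.1)
      rw [abs_of_nonneg (by linarith)]
      exact h3
    push_neg at h1 h2
    obtain ⟨u, huIcc, hφdu_ge, hdisj_u⟩ :
        ∃ u, u ∈ Icc a b ∧ -L ≤ φd u ∧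
          (u = a ∨ (φd u ≤ -L ∧ ∀ k ∈ Icc a u, L ≤ |φd k|)) := by
      by_cases hu0 : φd a ≤ -L
      · obtain ⟨u, huIcc, huval⟩ := intermediate_value_Icc hab.le hφdcont ⟨hu0, h1.le⟩
        refine ⟨u, huIcc, by rw [huval], Or.inr ⟨by rw [huval], ?_⟩⟩
        intro k hk
        have hkIcc : k ∈ Icc a b := ⟨hk.1, hk.2.trans huIcc.2⟩
        have h3 : φd k ≤ φd u := hmono k hkIcc u huIcc hk.2
        rw [huval] at h3
        rw [abs_of_nonpos (by linarith)]
        linarith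
      · push_neg at hu0
        exact ⟨a, hmem_a, hu0.le, Or.inl rfl⟩
    obtain ⟨v, hvIcc, hφdv_le, hdisj_v⟩ :
        ∃ v, v ∈ Icc a b ∧ φd v ≤ L ∧
          (v = b ∨ (L ≤ φd v ∧ ∀ k ∈ Icc v b, L ≤ |φd k|)) := by
      by_cases hv0 : L ≤ φd b
      · obtain ⟨v, hvIcc, hvval⟩ := intermediate_value_Icc hab.le hφdcont ⟨h2.le, hv0⟩
        refine ⟨v, hvIcc, by rw [hvval], Or.inr ⟨by rw [hvval], ?_⟩⟩
        intro k hk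
        have hkIcc : k ∈ Icc a b := ⟨hvIcc.1.trans hk.1, hk.2⟩
        have h3 : φd v ≤ φd k := hmono v hvIcc k hkIcc hk.1
        rw [hvval] at h3
        rw [abs_of_nonneg (by linarith)]
        linarith
      · push_neg at hv0
        exact ⟨b, hmem_b, hv0.le, Or.inl rfl⟩
    have huv : u ≤ v := by
      rcases hdisj_u with rfl | hbigu
      · exact hvIcc.1
      rcases hdisj_v with rfl | hbigv
      · exact huIcc.2
      by_contra hcon
      push_neg at hcon
      have h3 : φd v ≤ φd u := hmono v hvIcc u huIcc hcon.le
      have h4 : φd u ≤ -L := hbigu.1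
      have h5 : L ≤ φd v := hbigv.1
      linarith
    have hmid : v - u ≤ 2 / L := by
      have h3 := hgap u huIcc v hvIcc huv
      have h4 : lam * (v - u) ≤ 2 * L := by linarith
      have h5 : v - u ≤ 2 * L / lam := by
        rw [le_div_iff₀ hlam0]
        linarith [h4, mul_comm (v - u) lam]
      have h6 : 2 * L / lam = 2 / L := by
        rw [← hLsq]
        field_simp
      linarith [h5, h6.le]
    exact ⟨u, v, huIcc.1, huv, hvIcc.2, hdisj_u.imp_right And.right,
      hdisj_v.imp_right And.right, hmid⟩
  -- integrand
  set F : ℝ → ℂ := fun k => f k * Complex.exp (Complex.I * ((φ k : ℝ) : ℂ)) with hF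
  have hexpnorm : ∀ r : ℝ, ‖Complex.exp (Complex.I * (r : ℂ))‖ = 1 := by
    intro r
    rw [mul_comm]
    exact Complex.norm_exp_ofReal_mul_I r
  have hFcont : ContinuousOn F (Icc a b) :=
    hfc.continuousOn.mul (Complex.continuous_exp.comp_continuousOn
      (continuousOn_const.mul (Complex.continuous_ofReal.comp_continuousOn hφcont)))
  have hFint : ∀ c d : ℝ, c ∈ Icc a b → d ∈ Icc a b → IntervalIntegrable F volume c d := by
    intro c d hc hd
    exact (hFcont.mono (uIcc_subset_Icc hc hd)).intervalIntegrable
  -- conversion of the region of integration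
  have hF0 : ∀ k, k ∉ Ioo a b → F k = 0 := by
    intro k hk
    rw [hF]
    simp [hsupp k hk]
  have hconv1 : (∫ k in Ioi (0:ℝ), F k) = ∫ k in a..b, F k := by
    have hA : (∫ k in Ioi (0:ℝ), F k) = ∫ k, F k :=
      setIntegral_eq_integral_of_forall_compl_eq_zero
        (fun k hk => hF0 k (fun hk' => hk (mem_Ioi.mpr (lt_trans ha hk'.1))))
    have hB : (∫ k in Ioo a b, F k) = ∫ k, F k :=
      setIntegral_eq_integral_of_forall_compl_eq_zero hF0
    rw [hA, ← hB, intervalIntegral.integral_of_le hab.le, integral_Ioc_eq_integral_Ioo]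
  -- decompose and bound
  have hmemu : u ∈ Icc a b := ⟨hau, huv.trans hvb⟩
  have hmemv : v ∈ Icc a b := ⟨hau.trans huv, hvb⟩
  have e1 : (∫ k in a..u, F k) + (∫ k in u..v, F k) = ∫ k in a..v, F k :=
    intervalIntegral.integral_add_adjacent_intervals (hFint a u hmem_a hmemu)
      (hFint u v hmemu hmemv)
  have e2 : (∫ k in a..v, F k) + (∫ k in v..b, F k) = ∫ k in a..b, F k :=
    intervalIntegral.integral_add_adjacent_intervals (hFint a v hmem_a hmemv)
      (hFint v b hmemv hmem_b)
  have hbound1 : ‖∫ k in a..u, F k‖ ≤ (4 * M0 + (b - a) * M1) / L := by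
    rcases hu with hua | hbig
    · rw [hua, intervalIntegral.integral_same, norm_zero]
      have : (0:ℝ) ≤ b - a := by linarith
      positivity
    · have := sp_piece a b a u L M0 M1 hL0 hM0 hM1 (le_refl a) hau (huv.trans hvb)
        φ φd φdd hφ hφd hφdd0 (hmeas a u (le_refl a) (huv.trans hvb)) hbig f hf hfM0 hfM1
      simpa [hF] using this
  have hbound3 : ‖∫ k in v..b, F k‖ ≤ (4 * M0 + (b - a) * M1) / L := by
    rcases hv with hvb2 | hbig
    · rw [hvb2, intervalIntegral.integral_same, norm_zero]
      have : (0:ℝ) ≤ b - a := by linarith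
      positivity
    · have := sp_piece a b v b L M0 M1 hL0 hM0 hM1 (hau.trans huv) hvb (le_refl b)
        φ φd φdd hφ hφd hφdd0 (hmeas v b (hau.trans huv) (le_refl b)) hbig f hf hfM0 hfM1
      simpa [hF] using this
  have hbound2 : ‖∫ k in u..v, F k‖ ≤ 2 * M0 / L := by
    have h1 : ‖∫ k in u..v, F k‖ ≤ M0 * |v - u| := by
      apply intervalIntegral.norm_integral_le_of_norm_le_const
      intro k hk
      rw [hF]
      simp only []
      rw [norm_mul, hexpnorm, mul_one]
      exact hfM0 k
    have h2 : |v - u| = v - u := _root_.abs_of_nonneg (by linarith)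
    calc ‖∫ k in u..v, F k‖ ≤ M0 * |v - u| := h1
      _ = M0 * (v - u) := by rw [h2]
      _ ≤ M0 * (2 / L) := mul_le_mul_of_nonneg_left hmid hM0
      _ = 2 * M0 / L := by ring
  have htotal : ‖∫ k in a..b, F k‖ ≤ (10 * M0 + 2 * (b - a) * M1) / L := by
    calc ‖∫ k in a..b, F k‖
        = ‖((∫ k in a..u, F k) + (∫ k in u..v, F k)) + (∫ k in v..b, F k)‖ := by
          rw [e1, e2]
      _ ≤ ‖(∫ k in a..u, F k) + (∫ k in u..v, F k)‖ + ‖∫ k in v..b, F k‖ := norm_add_le _ _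
      _ ≤ (‖∫ k in a..u, F k‖ + ‖∫ k in u..v, F k‖) + ‖∫ k in v..b, F k‖ := by
          have := norm_add_le (∫ k in a..u, F k) (∫ k in u..v, F k)
          linarith
      _ ≤ ((4 * M0 + (b - a) * M1) / L + 2 * M0 / L) + (4 * M0 + (b - a) * M1) / L :=
          add_le_add (add_le_add hbound1 hbound2) hbound3
      _ = (10 * M0 + 2 * (b - a) * M1) / L := by ring
  -- convert the RHS
  have hLval : L = Real.sqrt c₀ * Real.sqrt (Q t) := by
    rw [hLdef, hlamdef]
    exact Real.sqrt_mul hc₀.le _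
  have hrpow : (Q t) ^ (-(1:ℝ)/2) = (Real.sqrt (Q t))⁻¹ := by
    have h1 : (-(1:ℝ)/2) = -(1/2 : ℝ) := by norm_num
    rw [h1, Real.rpow_neg hQt0.le, ← Real.sqrt_eq_rpow]
  have hsc : (0:ℝ) < Real.sqrt c₀ := Real.sqrt_pos.mpr hc₀
  have hsq : (0:ℝ) < Real.sqrt (Q t) := Real.sqrt_pos.mpr hQt0
  have hfin : (10 * M0 + 2 * (b - a) * M1) / Real.sqrt c₀ * (Q t) ^ (-(1:ℝ)/2)
      = (10 * M0 + 2 * (b - a) * M1) / L := by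
    rw [hrpow, hLval]
    field_simp
  calc ‖∫ k in Ioi (0:ℝ), F k‖ = ‖∫ k in a..b, F k‖ := by rw [hconv1]
    _ ≤ (10 * M0 + 2 * (b - a) * M1) / L := htotal
    _ = (10 * M0 + 2 * (b - a) * M1) / Real.sqrt c₀ * (Q t) ^ (-(1:ℝ)/2) := hfin.symm
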